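/- On a Boolean locale, a morphism of sheaves of k-vector spaces F → F' is an epimorphism if and only if the induced map on global sections F(X) → F'(X) is surjective; in particular the unit sheaf k_X is a projective object. -/
import Mathlib


universe u v

/-- A presheaf of `k`-vector spaces on a Boolean locale, presented as a presheaf on
its complete Boolean frame `B`. -/
structure KPresheaf (B : Type u) [CompleteBooleanAlgebra B] (k : Type v) [Field k] where
  obj : B → Type (max u v)
  [acg : ∀ V, AddCommGroup (obj V)]
  [mod : ∀ V, Module k (obj V)]
  res : ∀ {V W : B}, V ≤ W → obj W →ₗ[k] obj V
  res_refl : ∀ (V : B) (x : obj V), res le_rfl x = x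
  res_comp : ∀ {V W Z : B} (h1 : V ≤ W) (h2 : W ≤ Z) (x : obj Z),
    res h1 (res h2 x) = res (h1.trans h2) x

attribute [instance] KPresheaf.acg KPresheaf.mod

variable {B : Type u} [CompleteBooleanAlgebra B] {k : Type v} [Field k]

/-- The sheaf condition on a Boolean locale: the presheaf carries disjoint joins to
products. -/
def KPresheaf.IsSheaf (F : KPresheaf B k) : Prop :=
  ∀ (I : Type u) (a : I → B), (Pairwise fun i j => a i ⊓ a j = ⊥) →
    Function.Bijective
      (fun (x : F.obj (⨆ i, a i)) (i : I) => F.res (le_iSup a i) x)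

/-- A morphism of presheaves of `k`-vector spaces. -/
@[ext]
structure KHom (F G : KPresheaf B k) where
  map : ∀ V : B, F.obj V →ₗ[k] G.obj V
  natural : ∀ {V W : B} (h : V ≤ W) (x : F.obj W),
    G.res h (map W x) = map V (F.res h x)

/-- Composition of morphisms of presheaves. -/
def KHom.comp {F G H : KPresheaf B k} (g : KHom G H) (f : KHom F G) : KHom F H where
  map V := (g.map V).comp (f.map V)
  natural := by
    intro V W h x
    dsimp
    rw [g.natural, f.natural]

/-- A morphism of sheaves is an epimorphism if it is right-cancellable against
morphisms into sheaves. -/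
def KEpi {F G : KPresheaf B k} (φ : KHom F G) : Prop :=
  ∀ (H : KPresheaf B k), H.IsSheaf →
    ∀ g h : KHom G H, g.comp φ = h.comp φ → g = h

/-- A morphism of sheaves is a monomorphism if it is left-cancellable against
morphisms from sheaves. -/
def KMono {F G : KPresheaf B k} (φ : KHom F G) : Prop :=
  ∀ (H : KPresheaf B k), H.IsSheaf →
    ∀ g h : KHom H F, φ.comp g = φ.comp h → g = h

/-- The cokernel presheaf of a morphism. -/
noncomputable def KHom.coker {F F' : KPresheaf B k} (φ : KHom F F') : KPresheaf B k where
  obj V := F'.obj V ⧸ LinearMap.range (φ.map V)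
  res {V W} h := Submodule.mapQ _ _ (F'.res h) (by
    rintro x ⟨y, rfl⟩
    exact ⟨F.res h y, (φ.natural h y).symm⟩)
  res_refl := by
    intro V x
    obtain ⟨y, rfl⟩ := Submodule.Quotient.mk_surjective _ x
    rw [Submodule.mapQ_apply, F'.res_refl]
  res_comp := by
    intro V W Z h1 h2 x
    obtain ⟨y, rfl⟩ := Submodule.Quotient.mk_surjective _ x
    rw [Submodule.mapQ_apply, Submodule.mapQ_apply, Submodule.mapQ_apply, F'.res_comp]

theorem coker_isSheaf {F F' : KPresheaf B k} (hF : F.IsSheaf) (hF' : F'.IsSheaf)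
    (φ : KHom F F') : φ.coker.IsSheaf := by
  intro I a hdisj
  constructor
  · intro q1 q2 hq
    obtain ⟨z1, rfl⟩ := Submodule.Quotient.mk_surjective _ q1
    obtain ⟨z2, rfl⟩ := Submodule.Quotient.mk_surjective _ q2
    have h1 : ∀ i, ∃ y : F.obj (a i),
        φ.map (a i) y = F'.res (le_iSup a i) z1 - F'.res (le_iSup a i) z2 := by
      intro i
      have hi := congrFun hq i
      simp only [KHom.coker, Submodule.mapQ_apply] at hi
      exact (Submodule.Quotient.eq _).1 hi
    choose y hy using h1
    obtain ⟨Y, hY⟩ := (hF I a hdisj).2 y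
    have hglue : φ.map (⨆ i, a i) Y = z1 - z2 := by
      apply (hF' I a hdisj).1
      funext i
      dsimp only
      have hYi : F.res (le_iSup a i) Y = y i := congrFun hY i
      rw [φ.natural, hYi, hy i, map_sub]
    exact (Submodule.Quotient.eq _).2 ⟨Y, hglue⟩
  · intro q
    choose z hz using fun i => Submodule.Quotient.mk_surjective _ (q i)
    obtain ⟨Z, hZ⟩ := (hF' I a hdisj).2 z
    refine ⟨Submodule.Quotient.mk Z, ?_⟩
    funext i
    have hres : φ.coker.res (le_iSup a i) (Submodule.Quotient.mk Z) =
        Submodule.Quotient.mk (F'.res (le_iSup a i) Z) := rfl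
    have hZi : F'.res (le_iSup a i) Z = z i := congrFun hZ i
    dsimp only
    rw [hres, hZi, hz]

/-- The projection onto the cokernel. -/
noncomputable def KHom.cokerProj {F F' : KPresheaf B k} (φ : KHom F F') :
    KHom F' φ.coker where
  map V := (LinearMap.range (φ.map V)).mkQ
  natural := fun _ _ => rfl

/-- The zero morphism into the cokernel. -/
noncomputable def KHom.cokerZero {F F' : KPresheaf B k} (φ : KHom F F') :
    KHom F' φ.coker where
  map V := 0
  natural := by
    intro V W h x
    simp

/-- On a Boolean locale, a morphism of sheaves of `k`-vector spaces is an epimorphism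
if and only if it is surjective on global sections. (In particular, the global
sections functor — i.e. `Hom(k_X, -)` — preserves epimorphisms, which says that the
unit sheaf `k_X` is projective.) -/
theorem kEpi_iff_surjective_on_global_sections
    {F F' : KPresheaf B k} (hF : F.IsSheaf) (hF' : F'.IsSheaf) (φ : KHom F F') :
    KEpi φ ↔ Function.Surjective (φ.map ⊤) := by
  constructor
  · intro hepi
    have hgz : φ.cokerProj = φ.cokerZero := by
      apply hepi φ.coker (coker_isSheaf hF hF' φ)
      apply KHom.ext
      funext V
      apply LinearMap.ext
      intro x
      show Submodule.Quotient.mk (φ.map V x) = (0 : F'.obj V ⧸ _)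
      exact (Submodule.Quotient.mk_eq_zero _).2 (LinearMap.mem_range_self _ x)
    intro x'
    have hx : φ.cokerProj.map ⊤ x' = φ.cokerZero.map ⊤ x' := by rw [hgz]
    exact (Submodule.Quotient.mk_eq_zero _).1 hx
  · intro hsurj H _hH g h hgh
    apply KHom.ext
    funext V
    apply LinearMap.ext
    intro y
    -- Extend `y` to a global section of `F'` by gluing with `0` on `Vᶜ`.
    set a : ULift.{u} Bool → B := fun i => match i with
      | ⟨true⟩ => V
      | ⟨false⟩ => Vᶜ with ha
    have hdisj : Pairwise fun i j => a i ⊓ a j = ⊥ := by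
      rintro ⟨i⟩ ⟨j⟩ hne
      match i, j with
      | true, true => exact absurd rfl hne
      | false, false => exact absurd rfl hne
      | true, false => exact inf_compl_eq_bot
      | false, true => exact compl_inf_eq_bot
    have hS : (⨆ i, a i) = ⊤ := by
      apply le_antisymm le_top
      rw [← sup_compl_eq_top (x := V)]
      exact sup_le (le_iSup a ⟨true⟩) (le_iSup a ⟨false⟩)
    set f : ∀ i, F'.obj (a i) := fun i => match i with
      | ⟨true⟩ => y
      | ⟨false⟩ => 0 with hf
    obtain ⟨z, hz⟩ := (hF' (ULift.{u} Bool) a hdisj).2 f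
    have hzV : F'.res (le_iSup a ⟨true⟩) z = y := congrFun hz ⟨true⟩
    set z' : F'.obj ⊤ := F'.res hS.ge z with hz'
    have hz'V : F'.res (le_top : V ≤ ⊤) z' = y := by
      rw [hz', F'.res_comp]
      exact hzV
    obtain ⟨x, hx⟩ := hsurj z'
    calc g.map V y = g.map V (F'.res le_top z') := by rw [hz'V]
      _ = H.res le_top (g.map ⊤ z') := (g.natural le_top z').symm
      _ = H.res le_top ((g.comp φ).map ⊤ x) := by rw [← hx]; rfl
      _ = H.res le_top ((h.comp φ).map ⊤ x) := by rw [hgh]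
      _ = H.res le_top (h.map ⊤ z') := by rw [← hx]; rfl
      _ = h.map V (F'.res le_top z') := h.natural le_top z'
      _ = h.map V y := by rw [hz'V]
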